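/- If {f_v : v ∈ N} is any orthonormal basis of V, then the left interior product satisfies, for all S, T ⊆ N: f_T ⌞ f_S = sgn(S∖T, T)·f_{S∖T} if T ⊆ S and 0 otherwise. In particular, the left interior product is independent of the choice of orthonormal basis. -/

import Mathlib

open Finset

variable {N : Type*} [Fintype N] [LinearOrder N]

/-- inv(S,T) = number of pairs (s,t) ∈ S × T with s > t. -/
def invCount (S T : Finset N) : ℕ := ((S ×ˢ T).filter fun p => p.2 < p.1).card

/-- sgn(S,T) = (-1)^inv(S,T). -/
def esign (S T : Finset N) : ℝ := (-1 : ℝ) ^ invCount S T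

/-- The basis vector e_S of the exterior algebra, modelled as `Finset N → ℝ`. -/
def eb (S : Finset N) : Finset N → ℝ := fun T => if T = S then 1 else 0

/-- The bilinear exterior product, defined on basis vectors by
`e_S ∧ e_T = sgn(S,T) e_{S∪T}` if `S ∩ T = ∅`, and `0` otherwise. -/
def wedge (f g : Finset N → ℝ) : Finset N → ℝ :=
  fun U => ∑ S ∈ U.powerset, esign S (U \ S) * f S * g (U \ S)

/-- Inner product on the exterior algebra making `{e_S}` orthonormal. -/
def ip (f g : Finset N → ℝ) : ℝ := ∑ S : Finset N, f S * g S

/-- A vector of V (coordinates `a`) viewed inside the exterior algebra. -/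
def vec (a : N → ℝ) : Finset N → ℝ := fun T => ∑ i : N, if T = {i} then a i else 0

/-- Inner product on V in coordinates. -/
def ipV (a b : N → ℝ) : ℝ := ∑ i : N, a i * b i

/-- Wedge product of a list of elements of the exterior algebra (e_∅ is the unit). -/
def wedgeList (l : List (Finset N → ℝ)) : Finset N → ℝ := l.foldr wedge (eb ∅)

/-- Ordered wedge product f_S = f_{s₁} ∧ ⋯ ∧ f_{s_k} for S = {s₁ < ⋯ < s_k},
for a family of vectors of V given in coordinates. -/
def wedgeFam (f : N → N → ℝ) (S : Finset N) : Finset N → ℝ :=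
  wedgeList ((S.sort (· ≤ ·)).map (fun v => vec (f v)))

/-- A family of vectors of V (in coordinates) is orthonormal. -/
def Orthonormalish (f : N → N → ℝ) : Prop :=
  ∀ u v : N, ipV (f u) (f v) = if u = v then 1 else 0

/-- The bilinear left interior product, defined on basis vectors by
`e_T ⌞ e_S = sgn(S∖T, T)·e_{S∖T}` if `T ⊆ S` and `0` otherwise. -/
def lint (g f : Finset N → ℝ) : Finset N → ℝ :=
  fun U => ∑ T : Finset N, if Disjoint T U then esign U T * g T * f (U ∪ T) else 0


set_option linter.unusedSectionVars false

section AuxSigns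
variable {N : Type*} [Fintype N] [LinearOrder N]

lemma invCount_eq_sum (S T : Finset N) :
    invCount S T = ∑ s ∈ S, ∑ t ∈ T, if t < s then 1 else 0 := by
  rw [invCount, Finset.card_filter, Finset.sum_product]

lemma invCount_union_right {T₁ T₂ : Finset N} (h : Disjoint T₁ T₂) (S : Finset N) :
    invCount S (T₁ ∪ T₂) = invCount S T₁ + invCount S T₂ := by
  simp only [invCount_eq_sum, Finset.sum_union h, Finset.sum_add_distrib]

lemma invCount_union_left {S₁ S₂ : Finset N} (h : Disjoint S₁ S₂) (T : Finset N) :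
    invCount (S₁ ∪ S₂) T = invCount S₁ T + invCount S₂ T := by
  simp only [invCount_eq_sum, Finset.sum_union h]

lemma esign_union_right {T₁ T₂ : Finset N} (h : Disjoint T₁ T₂) (S : Finset N) :
    esign S (T₁ ∪ T₂) = esign S T₁ * esign S T₂ := by
  rw [esign, esign, esign, invCount_union_right h, pow_add]

lemma esign_union_left {S₁ S₂ : Finset N} (h : Disjoint S₁ S₂) (T : Finset N) :
    esign (S₁ ∪ S₂) T = esign S₁ T * esign S₂ T := by
  rw [esign, esign, esign, invCount_union_left h, pow_add]

lemma esign_empty_right (S : Finset N) : esign S ∅ = 1 := by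
  simp [esign, invCount]

lemma esign_empty_left (T : Finset N) : esign ∅ T = 1 := by
  simp [esign, invCount]

lemma esign_mul_self (S T : Finset N) : esign S T * esign S T = 1 := by
  rw [esign, ← pow_add, ← two_mul, pow_mul]; norm_num

lemma invCount_singleton_right (S : Finset N) (i : N) :
    invCount S {i} = ∑ s ∈ S, if i < s then 1 else 0 := by
  rw [invCount_eq_sum]
  exact Finset.sum_congr rfl fun s _ => Finset.sum_singleton _ _

lemma invCount_singleton_left (S : Finset N) (i : N) :
    invCount {i} S = ∑ t ∈ S, if t < i then 1 else 0 := by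
  rw [invCount_eq_sum, Finset.sum_singleton]

/-- For `i ∉ U`, `inv(U,{i}) + inv({i},U) = |U|`. -/
lemma esign_singleton_diag {U : Finset N} {i : N} (h : i ∉ U) :
    esign U {i} * esign {i} U = (-1 : ℝ) ^ U.card := by
  rw [esign, esign, ← pow_add]
  congr 1
  rw [invCount_singleton_right, invCount_singleton_left, ← Finset.sum_add_distrib]
  rw [Finset.card_eq_sum_ones]
  refine Finset.sum_congr rfl fun u hu => ?_
  have : u ≠ i := fun e => h (e ▸ hu)
  rcases lt_trichotomy i u with hlt | heq | hgt
  · simp [hlt, not_lt.2 hlt.le]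
  · exact absurd heq.symm this
  · simp [hgt, not_lt.2 hgt.le]

/-- If `i` is below everything in `T`, `esign {i} T = 1`. -/
lemma esign_singleton_left_of_lt {T : Finset N} {i : N} (h : ∀ x ∈ T, i < x) :
    esign {i} T = 1 := by
  rw [esign, invCount_singleton_left]
  rw [Finset.sum_eq_zero fun t ht => by simp [not_lt.2 (h t ht).le]]
  simp

/-- If `i` is below everything in `S`, `esign S {i} = (-1)^|S|`. -/
lemma esign_singleton_right_of_lt {S : Finset N} {i : N} (h : ∀ x ∈ S, i < x) :
    esign S {i} = (-1 : ℝ) ^ S.card := by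
  rw [esign, invCount_singleton_right]
  congr 1
  rw [Finset.card_eq_sum_ones]
  exact Finset.sum_congr rfl fun s hs => by simp [h s hs]

end AuxSigns

section AuxStruct
variable {N : Type*} [Fintype N] [LinearOrder N]

lemma lint_smul_right (g x : Finset N → ℝ) (c : ℝ) :
    lint g (c • x) = c • lint g x := by
  funext U
  simp only [lint, Pi.smul_apply, smul_eq_mul, Finset.mul_sum]
  refine Finset.sum_congr rfl fun T _ => ?_
  split_ifs <;> ring

lemma lint_zero_right (g : Finset N → ℝ) : lint g (0 : Finset N → ℝ) = 0 := by
  funext U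
  simp [lint]

lemma wedge_smul_right (x y : Finset N → ℝ) (c : ℝ) :
    wedge x (c • y) = c • wedge x y := by
  funext U
  simp only [wedge, Pi.smul_apply, smul_eq_mul, Finset.mul_sum]
  exact Finset.sum_congr rfl fun T _ => by ring

lemma wedge_sum_right {ι : Type*} (x : Finset N → ℝ) (s : Finset ι) (g : ι → Finset N → ℝ) :
    wedge x (∑ i ∈ s, g i) = ∑ i ∈ s, wedge x (g i) := by
  funext U
  simp only [wedge, Finset.sum_apply]
  rw [Finset.sum_comm]
  refine Finset.sum_congr rfl fun T _ => ?_
  rw [Finset.mul_sum]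

/-- Pointwise formula for contraction with a vector. -/
lemma lint_vec (a : N → ℝ) (z : Finset N → ℝ) (U : Finset N) :
    lint (vec a) z U
      = ∑ i : N, if i ∈ U then 0 else esign U {i} * a i * z (insert i U) := by
  rw [lint]
  have step1 : ∀ T : Finset N,
      (if Disjoint T U then esign U T * vec a T * z (U ∪ T) else 0)
        = ∑ i : N, if T = {i} ∧ Disjoint T U then esign U T * a i * z (U ∪ T) else 0 := by
    intro T
    by_cases hD : Disjoint T U
    · rw [if_pos hD, vec, Finset.mul_sum, Finset.sum_mul]
      refine Finset.sum_congr rfl fun i _ => ?_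
      split_ifs with h1 h2 h2 <;> simp_all <;> ring
    · rw [if_neg hD, eq_comm, Finset.sum_eq_zero]
      intro i _
      rw [if_neg (by tauto)]
  rw [Finset.sum_congr rfl fun T _ => step1 T, Finset.sum_comm]
  refine Finset.sum_congr rfl fun i _ => ?_
  have : ∀ T : Finset N,
      (if T = {i} ∧ Disjoint T U then esign U T * a i * z (U ∪ T) else 0)
        = if T = {i} then (if Disjoint ({i} : Finset N) U then esign U {i} * a i * z (U ∪ {i}) else 0) else 0 := by
    intro T
    split_ifs with h1 h2 h3 h4 <;> simp_all
  rw [Finset.sum_congr rfl fun T _ => this T, Finset.sum_ite_eq' Finset.univ ({i} : Finset N), if_pos (Finset.mem_univ _)]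
  by_cases hi : i ∈ U
  · rw [if_neg (fun hD => (Finset.disjoint_singleton_left.mp hD) hi), if_pos hi]
  · rw [if_pos (Finset.disjoint_singleton_left.mpr hi), if_neg hi, Finset.union_comm,
      ← Finset.insert_eq]

/-- Pointwise formula for wedging with a vector on the left. -/
lemma wedge_vec (b : N → ℝ) (y : Finset N → ℝ) (U : Finset N) :
    wedge (vec b) y U
      = ∑ j : N, if j ∈ U then esign {j} (U.erase j) * b j * y (U.erase j) else 0 := by
  rw [wedge]
  have step1 : ∀ S : Finset N, S ∈ U.powerset →
      esign S (U \ S) * vec b S * y (U \ S)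
        = ∑ j : N, if S = {j} then esign S (U \ S) * b j * y (U \ S) else 0 := by
    intro S _
    rw [vec, Finset.mul_sum, Finset.sum_mul]
    refine Finset.sum_congr rfl fun j _ => ?_
    split_ifs <;> simp
  rw [Finset.sum_congr rfl step1, Finset.sum_comm]
  refine Finset.sum_congr rfl fun j _ => ?_
  rw [Finset.sum_ite_eq' U.powerset ({j} : Finset N)]
  by_cases hj : j ∈ U
  · rw [if_pos (Finset.mem_powerset.mpr (Finset.singleton_subset_iff.mpr hj)), if_pos hj,
      Finset.sdiff_singleton_eq_erase]
  · rw [if_neg (fun hmem => hj (Finset.singleton_subset_iff.mp (Finset.mem_powerset.mp hmem))),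
      if_neg hj]

lemma wedgeList_cons (x : Finset N → ℝ) (l : List (Finset N → ℝ)) :
    wedgeList (x :: l) = wedge x (wedgeList l) := rfl

/-- wedge of vectors is homogeneous. -/
lemma wedgeList_vec_homog (l : List (N → ℝ)) :
    ∀ U : Finset N, U.card ≠ l.length → wedgeList (l.map vec) U = 0 := by
  induction l with
  | nil =>
    intro U hU
    simp only [List.length_nil] at hU
    simp only [List.map_nil, wedgeList, List.foldr_nil, eb]
    rw [if_neg (by rintro rfl; simp at hU)]
  | cons a l ih =>
    intro U hU
    rw [List.map_cons, wedgeList_cons, wedge_vec]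
    refine Finset.sum_eq_zero fun j _ => ?_
    split_ifs with hj
    · have hpos : 0 < U.card := Finset.card_pos.mpr ⟨j, hj⟩
      simp only [List.length_cons] at hU
      rw [ih (U.erase j) (by rw [Finset.card_erase_of_mem hj]; omega), mul_zero]
    · rfl

lemma wedgeFam_homog (f : N → N → ℝ) (S : Finset N) (U : Finset N)
    (h : U.card ≠ S.card) : wedgeFam f S U = 0 := by
  rw [wedgeFam, show (S.sort (· ≤ ·)).map (fun v => vec (f v)) = ((S.sort (· ≤ ·)).map f).map vec by
    rw [List.map_map]; rfl]
  exact wedgeList_vec_homog _ U (by simpa using h)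

lemma wedgeFam_empty (f : N → N → ℝ) : wedgeFam f ∅ = eb ∅ := by
  simp [wedgeFam, wedgeList]

lemma wedgeFam_insert (f : N → N → ℝ) {m : N} {S : Finset N} (h : ∀ x ∈ S, m < x)
    (hm : m ∉ S) : wedgeFam f (insert m S) = wedge (vec (f m)) (wedgeFam f S) := by
  rw [wedgeFam, Finset.sort_insert (· ≤ ·) (fun b hb => (h b hb).le) hm, List.map_cons,
    wedgeList_cons, wedgeFam]

lemma lint_eb_empty (x : Finset N → ℝ) : lint (eb ∅) x = x := by
  funext U
  rw [lint]
  have : ∀ T : Finset N,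
      (if Disjoint T U then esign U T * eb ∅ T * x (U ∪ T) else 0)
        = if T = ∅ then esign U T * x (U ∪ T) else 0 := by
    intro T
    rw [eb]
    split_ifs with h1 h2 h2 <;> simp_all
  rw [Finset.sum_congr rfl fun T _ => this T,
    Finset.sum_ite_eq' Finset.univ (∅ : Finset N), if_pos (Finset.mem_univ _),
    esign_empty_right, Finset.union_empty, one_mul]

end AuxStruct

section AuxM2
variable {N : Type*} [Fintype N] [LinearOrder N]

/-- Contraction with a vector interacts with wedging by a vector via a
Leibniz-type rule (with a parity twist coming from the sign convention). -/
lemma lint_vec_wedge_vec (a b : N → ℝ) (y : Finset N → ℝ) (U : Finset N) :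
    lint (vec a) (wedge (vec b) y) U
      = ipV a b * (-1 : ℝ) ^ U.card * y U + wedge (vec b) (lint (vec a) y) U := by
  have hL : lint (vec a) (wedge (vec b) y) U
      = (∑ i : N, if i ∈ U then 0 else esign U {i} * esign {i} U * (a i * b i) * y U)
      + (∑ i : N, ∑ j : N, if i ∈ U then 0 else if j ∈ U then
          esign U {i} * esign {j} (insert i (U.erase j)) * (a i * b j) *
            y (insert i (U.erase j)) else 0) := by
    rw [lint_vec, ← Finset.sum_add_distrib]
    refine Finset.sum_congr rfl fun i _ => ?_
    by_cases hi : i ∈ U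
    · simp [hi]
    · simp only [if_neg hi]
      rw [wedge_vec, Finset.mul_sum]
      have key : ∀ j : N,
          esign U {i} * a i * (if j ∈ insert i U then
              esign {j} ((insert i U).erase j) * b j * y ((insert i U).erase j) else 0)
            = (if j = i then esign U {i} * esign {i} U * (a i * b i) * y U else 0)
              + (if j ∈ U then esign U {i} * esign {j} (insert i (U.erase j)) * (a i * b j) *
                  y (insert i (U.erase j)) else 0) := by
        intro j
        by_cases hji : j = i
        · subst hji
          rw [if_pos (Finset.mem_insert_self j U), if_pos rfl, if_neg hi,
            Finset.erase_insert hi, add_zero]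
          ring
        · by_cases hjU : j ∈ U
          · have hij : i ≠ j := fun h => hji h.symm
            rw [if_pos (Finset.mem_insert_of_mem hjU), if_neg hji, if_pos hjU, zero_add,
              Finset.erase_insert_of_ne hij]
            ring
          · have hni : j ∉ insert i U := by
              rw [Finset.mem_insert]; tauto
            rw [if_neg hni, if_neg hji, if_neg hjU, mul_zero, add_zero]
      rw [Finset.sum_congr rfl fun j _ => key j, Finset.sum_add_distrib,
        Finset.sum_ite_eq' Finset.univ i, if_pos (Finset.mem_univ _)]
  have hR : wedge (vec b) (lint (vec a) y) U
      = (∑ i : N, if i ∈ U then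
            esign {i} (U.erase i) * esign (U.erase i) {i} * (a i * b i) * y U else 0)
      + (∑ j : N, ∑ i : N, if j ∈ U then (if i ∈ U then 0 else
            esign {j} (U.erase j) * esign (U.erase j) {i} * (a i * b j) *
              y (insert i (U.erase j))) else 0) := by
    rw [wedge_vec, ← Finset.sum_add_distrib]
    refine Finset.sum_congr rfl fun j _ => ?_
    by_cases hj : j ∈ U
    · simp only [if_pos hj]
      rw [lint_vec, Finset.mul_sum]
      have key : ∀ i : N,
          esign {j} (U.erase j) * b j * (if i ∈ U.erase j then 0 else
              esign (U.erase j) {i} * a i * y (insert i (U.erase j)))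
            = (if i = j then
                esign {j} (U.erase j) * esign (U.erase j) {j} * (a j * b j) * y U else 0)
              + (if i ∈ U then 0 else
                esign {j} (U.erase j) * esign (U.erase j) {i} * (a i * b j) *
                  y (insert i (U.erase j))) := by
        intro i
        by_cases hij : i = j
        · subst hij
          rw [if_neg (Finset.notMem_erase i U), if_pos rfl, Finset.insert_erase hj,
            if_pos hj, add_zero]
          ring
        · by_cases hiU : i ∈ U
          · have : i ∈ U.erase j := Finset.mem_erase.mpr ⟨hij, hiU⟩
            rw [if_pos this, if_neg hij, if_pos hiU, mul_zero, add_zero]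
          · have : i ∉ U.erase j := fun h => hiU (Finset.mem_of_mem_erase h)
            rw [if_neg this, if_neg hij, if_neg hiU, zero_add]
            ring
      rw [Finset.sum_congr rfl fun i _ => key i, Finset.sum_add_distrib,
        Finset.sum_ite_eq' Finset.univ j, if_pos (Finset.mem_univ _)]
    · simp [hj]
  rw [hL, hR]
  have hcross : (∑ i : N, ∑ j : N, if i ∈ U then 0 else if j ∈ U then
          esign U {i} * esign {j} (insert i (U.erase j)) * (a i * b j) *
            y (insert i (U.erase j)) else 0)
      = (∑ j : N, ∑ i : N, if j ∈ U then (if i ∈ U then 0 else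
            esign {j} (U.erase j) * esign (U.erase j) {i} * (a i * b j) *
              y (insert i (U.erase j))) else 0) := by
    rw [Finset.sum_comm]
    refine Finset.sum_congr rfl fun j _ => Finset.sum_congr rfl fun i _ => ?_
    by_cases hi : i ∈ U
    · simp [hi]
    · by_cases hj : j ∈ U
      · rw [if_neg hi, if_pos hj, if_pos hj, if_neg hi]
        have h1 : esign U {i} = esign {j} {i} * esign (U.erase j) {i} := by
          conv_lhs => rw [← Finset.insert_erase hj]
          rw [Finset.insert_eq,
            esign_union_left (Finset.disjoint_singleton_left.mpr (Finset.notMem_erase j U))]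
        have h2 : esign {j} (insert i (U.erase j)) = esign {j} {i} * esign {j} (U.erase j) := by
          rw [Finset.insert_eq,
            esign_union_right
              (Finset.disjoint_singleton_left.mpr (fun h => hi (Finset.mem_of_mem_erase h)))]
        rw [h1, h2]
        have h3 := esign_mul_self ({j} : Finset N) ({i} : Finset N)
        linear_combination (esign (U.erase j) {i} * esign {j} (U.erase j) * (a i * b j) *
          y (insert i (U.erase j))) * h3
      · simp [hi, hj]
  rw [hcross]
  have hdiag : (∑ i : N, if i ∈ U then 0 else esign U {i} * esign {i} U * (a i * b i) * y U)
      = ipV a b * (-1 : ℝ) ^ U.card * y U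
      + (∑ i : N, if i ∈ U then
            esign {i} (U.erase i) * esign (U.erase i) {i} * (a i * b i) * y U else 0) := by
    rw [ipV, Finset.sum_mul, Finset.sum_mul, ← Finset.sum_add_distrib]
    refine Finset.sum_congr rfl fun i _ => ?_
    by_cases hi : i ∈ U
    · rw [if_pos hi, if_pos hi]
      have hd := esign_singleton_diag (Finset.notMem_erase i U)
      have hc : U.card = (U.erase i).card + 1 := (Finset.card_erase_add_one hi).symm
      rw [hc, pow_succ]
      linear_combination (-(a i * b i * y U)) * hd
    · rw [if_neg hi, if_neg hi, add_zero]
      have hd := esign_singleton_diag hi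
      linear_combination (a i * b i * y U) * hd
  rw [hdiag]
  ring

end AuxM2

section AuxV1
variable {N : Type*} [Fintype N] [LinearOrder N]

/-- Contraction of an ordered wedge product by a vector. -/
lemma lint_vec_wedgeFam (f : N → N → ℝ) (a : N → ℝ) (S : Finset N) :
    lint (vec a) (wedgeFam f S)
      = ∑ s ∈ S, (ipV a (f s) * esign (S.erase s) {s}) • wedgeFam f (S.erase s) := by
  induction S using Finset.induction_on_min with
  | empty =>
    rw [wedgeFam_empty, Finset.sum_empty]
    funext U
    rw [lint_vec, Pi.zero_apply]
    refine Finset.sum_eq_zero fun i _ => ?_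
    split_ifs with hi
    · rfl
    · rw [show eb (∅ : Finset N) (insert i U) = 0 from if_neg (Finset.insert_ne_empty i U),
        mul_zero]
  | insert m S' hlt ih =>
    have hm : m ∉ S' := fun h => lt_irrefl m (hlt m h)
    have key : lint (vec a) (wedgeFam f (insert m S'))
        = (ipV a (f m) * (-1 : ℝ) ^ S'.card) • wedgeFam f S'
          + wedge (vec (f m)) (lint (vec a) (wedgeFam f S')) := by
      rw [wedgeFam_insert f hlt hm]
      funext U
      rw [Pi.add_apply, Pi.smul_apply, smul_eq_mul, lint_vec_wedge_vec]
      congr 1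
      by_cases hc : U.card = S'.card
      · rw [hc]
      · rw [wedgeFam_homog f S' U hc, mul_zero, mul_zero]
    rw [key, ih, wedge_sum_right, Finset.sum_insert hm]
    congr 1
    · rw [Finset.erase_insert hm, esign_singleton_right_of_lt hlt]
    · refine Finset.sum_congr rfl fun s hs => ?_
      have hms : m ≠ s := fun h => hm (h ▸ hs)
      have hmes : m ∉ S'.erase s := fun h => hm (Finset.mem_of_mem_erase h)
      rw [wedge_smul_right,
        ← wedgeFam_insert f (fun x hx => hlt x (Finset.mem_of_mem_erase hx)) hmes,
        Finset.erase_insert_of_ne hms,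
        show esign ((insert m (S'.erase s))) {s} = esign (S'.erase s) {s} from by
          rw [Finset.insert_eq, esign_union_left (Finset.disjoint_singleton_left.mpr hmes),
            esign_singleton_left_of_lt (fun x hx => by
              rw [Finset.mem_singleton] at hx; exact hx ▸ hlt s hs), one_mul]]

/-- Contraction is "multiplicative": `(g₁ ∧ g₂) ⌟ x = g₁ ⌟ (g₂ ⌟ x)`. -/
lemma lint_wedge (g₁ g₂ x : Finset N → ℝ) :
    lint (wedge g₁ g₂) x = lint g₁ (lint g₂ x) := by
  funext U
  have powEq : ∀ T : Finset N, T.powerset = Finset.univ.filter (· ⊆ T) := by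
    intro T; ext A; simp
  have hRHS : lint g₁ (lint g₂ x) U
      = ∑ A : Finset N, ∑ B : Finset N,
          if Disjoint A U ∧ Disjoint B U ∧ Disjoint A B then
            esign U A * esign U B * esign A B * (g₁ A * g₂ B) * x (U ∪ A ∪ B) else 0 := by
    rw [lint]
    refine Finset.sum_congr rfl fun A _ => ?_
    by_cases hA : Disjoint A U
    · rw [if_pos hA, lint, Finset.mul_sum]
      refine Finset.sum_congr rfl fun B _ => ?_
      by_cases hB : Disjoint B (U ∪ A)
      · have hBU : Disjoint B U := (Finset.disjoint_union_right.mp hB).1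
        have hBA : Disjoint B A := (Finset.disjoint_union_right.mp hB).2
        rw [if_pos hB, if_pos ⟨hA, hBU, hBA.symm⟩,
          esign_union_left (show Disjoint U A from hA.symm)]
        ring
      · rw [if_neg hB, mul_zero, if_neg (fun h =>
          hB (Finset.disjoint_union_right.mpr ⟨h.2.1, h.2.2.symm⟩))]
    · rw [if_neg hA, eq_comm]
      exact Finset.sum_eq_zero fun B _ => if_neg (by tauto)
  have hLHS : lint (wedge g₁ g₂) x U
      = ∑ A : Finset N, ∑ B : Finset N,
          if Disjoint A U ∧ Disjoint B U ∧ Disjoint A B then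
            esign U A * esign U B * esign A B * (g₁ A * g₂ B) * x (U ∪ A ∪ B) else 0 := by
    rw [lint]
    have step1 : ∀ T : Finset N,
        (if Disjoint T U then esign U T * wedge g₁ g₂ T * x (U ∪ T) else 0)
          = ∑ A : Finset N, if A ⊆ T ∧ Disjoint T U then
              esign U T * esign A (T \ A) * (g₁ A * g₂ (T \ A)) * x (U ∪ T) else 0 := by
      intro T
      by_cases hT : Disjoint T U
      · rw [if_pos hT, wedge, powEq T, Finset.sum_filter, Finset.mul_sum, Finset.sum_mul]
        refine Finset.sum_congr rfl fun A _ => ?_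
        split_ifs with h1 h2 h2 <;> [skip; tauto; tauto; skip] <;> ring
      · rw [if_neg hT, eq_comm]
        exact Finset.sum_eq_zero fun A _ => if_neg (by tauto)
    rw [Finset.sum_congr rfl fun T _ => step1 T, Finset.sum_comm]
    refine Finset.sum_congr rfl fun A _ => ?_
    rw [show (∑ T : Finset N, if A ⊆ T ∧ Disjoint T U then
          esign U T * esign A (T \ A) * (g₁ A * g₂ (T \ A)) * x (U ∪ T) else 0)
        = ∑ T ∈ Finset.univ.filter (fun T => A ⊆ T ∧ Disjoint T U),
            esign U T * esign A (T \ A) * (g₁ A * g₂ (T \ A)) * x (U ∪ T) from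
        (Finset.sum_filter _ _).symm,
      show (∑ B : Finset N, if Disjoint A U ∧ Disjoint B U ∧ Disjoint A B then
          esign U A * esign U B * esign A B * (g₁ A * g₂ B) * x (U ∪ A ∪ B) else 0)
        = ∑ B ∈ Finset.univ.filter
            (fun B => Disjoint A U ∧ Disjoint B U ∧ Disjoint A B),
            esign U A * esign U B * esign A B * (g₁ A * g₂ B) * x (U ∪ A ∪ B) from
        (Finset.sum_filter _ _).symm]
    refine Finset.sum_nbij' (fun T => T \ A) (fun B => A ∪ B) ?_ ?_ ?_ ?_ ?_
    · intro T hT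
      rw [Finset.mem_filter] at hT ⊢
      obtain ⟨-, hAT, hTU⟩ := hT
      exact ⟨Finset.mem_univ _, Finset.disjoint_of_subset_left hAT hTU,
        Finset.disjoint_of_subset_left Finset.sdiff_subset hTU,
        Finset.disjoint_sdiff⟩
    · intro B hB
      rw [Finset.mem_filter] at hB ⊢
      obtain ⟨-, hAU, hBU, hAB⟩ := hB
      exact ⟨Finset.mem_univ _, Finset.subset_union_left,
        Finset.disjoint_union_left.mpr ⟨hAU, hBU⟩⟩
    · intro T hT
      rw [Finset.mem_filter] at hT
      exact Finset.union_sdiff_of_subset hT.2.1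
    · intro B hB
      rw [Finset.mem_filter] at hB
      exact Finset.union_sdiff_cancel_left hB.2.2.2
    · intro T hT
      rw [Finset.mem_filter] at hT
      obtain ⟨-, hAT, hTU⟩ := hT
      have hUT : esign U T = esign U A * esign U (T \ A) := by
        conv_lhs => rw [← Finset.union_sdiff_of_subset hAT]
        exact esign_union_right Finset.disjoint_sdiff _
      rw [hUT, show U ∪ T = U ∪ A ∪ (T \ A) from by
        rw [Finset.union_assoc, Finset.union_sdiff_of_subset hAT]]
  rw [hLHS, hRHS]

end AuxV1


/-- For any orthonormal basis {f_v} of V: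
f_T ⌞ f_S = sgn(S∖T, T)·f_{S∖T} if T ⊆ S and 0 otherwise; in particular the left
interior product is independent of the choice of orthonormal basis. -/
theorem lint_wedgeFam (f : N → N → ℝ) (hf : Orthonormalish f) (S T : Finset N) :
    lint (wedgeFam f T) (wedgeFam f S)
      = if T ⊆ S then esign (S \ T) T • wedgeFam f (S \ T) else 0 := by
  induction T using Finset.induction_on_min with
  | empty =>
    rw [wedgeFam_empty, lint_eb_empty, if_pos (Finset.empty_subset S), Finset.sdiff_empty,
      esign_empty_right, one_smul]
  | insert m T' hlt ih =>
    have hm : m ∉ T' := fun h => lt_irrefl m (hlt m h)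
    rw [wedgeFam_insert f hlt hm, lint_wedge, ih]
    by_cases hT'S : T' ⊆ S
    · rw [if_pos hT'S, lint_smul_right, lint_vec_wedgeFam]
      have hcol : ∀ s ∈ S \ T',
          (ipV (f m) (f s) * esign ((S \ T').erase s) {s}) • wedgeFam f ((S \ T').erase s)
            = if m = s then
                esign ((S \ T').erase s) {s} • wedgeFam f ((S \ T').erase s) else 0 := by
        intro s _
        rw [hf m s]
        split_ifs
        · rw [one_mul]
        · rw [zero_mul, zero_smul]
      rw [Finset.sum_congr rfl hcol, Finset.sum_ite_eq]
      by_cases hmS : m ∈ S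
      · have hmem : m ∈ S \ T' := Finset.mem_sdiff.mpr ⟨hmS, hm⟩
        have hsetEq : (S \ T').erase m = S \ insert m T' := by
          ext x
          simp only [Finset.mem_erase, Finset.mem_sdiff, Finset.mem_insert]
          tauto
        rw [if_pos hmem, if_pos (Finset.insert_subset hmS hT'S), hsetEq, smul_smul]
        congr 1
        have h1 : S \ T' = {m} ∪ (S \ insert m T') := by
          ext x
          simp only [Finset.mem_sdiff, Finset.mem_union, Finset.mem_singleton,
            Finset.mem_insert]
          constructor
          · rintro ⟨hxS, hxT⟩
            by_cases hxm : x = m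
            · exact Or.inl hxm
            · exact Or.inr ⟨hxS, fun h => h.elim (fun e => hxm e) hxT⟩
          · rintro (rfl | ⟨hxS, hxT⟩)
            · exact ⟨hmS, hm⟩
            · exact ⟨hxS, fun h => hxT (Or.inr h)⟩
        have hdisj : Disjoint ({m} : Finset N) (S \ insert m T') :=
          Finset.disjoint_singleton_left.mpr
            (fun h => (Finset.mem_sdiff.mp h).2 (Finset.mem_insert_self m T'))
        have h2 : ∀ X : Finset N, esign X (insert m T') = esign X {m} * esign X T' := by
          intro X
          rw [Finset.insert_eq]
          exact esign_union_right (Finset.disjoint_singleton_left.mpr hm) X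
        rw [h1, esign_union_left hdisj, esign_singleton_left_of_lt hlt, one_mul,
          h2 (S \ insert m T')]
        ring
      · have hnm : m ∉ S \ T' := fun h => hmS (Finset.mem_sdiff.mp h).1
        rw [if_neg hnm, smul_zero,
          if_neg (fun h => hmS (h (Finset.mem_insert_self m T')))]
    · rw [if_neg hT'S, lint_zero_right,
        if_neg (fun h => hT'S (fun x hx => h (Finset.mem_insert_of_mem hx)))]
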